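/- arXiv:1611.00423 — 9 statements merged into one kernel-verified Lean document; each statement's English description precedes it below -/
import Mathlib

section
/- Let S be a finite set of points in ℝ², let K ⊆ sk(S) be a set of already-found skyline points, and let R = {p ∈ S : ∀ k ∈ K, p ≤ k → p = k} be the set of points of S not strictly dominated by any point of K. Then sk(S) = sk(R); moreover, if R is nonempty, then the maximum of R in the lexicographic order (x-coordinate first, then y-coordinate) and the maximum of R in the lexicographic order (y-coordinate first, then x-coordinate) both belong to sk(S). -/
/-!
Every point of a finite set lies below a maximal one, and a maximal point of `S` survives the
pruning by `K ⊆ S`; hence `S` and the pruned set `R` have the same maximal points. A maximum of `R`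
for a lexicographic order is maximal in `R` for the product order, because both lexicographic
orders extend the product order.
-/

/-- The skyline (set of maximal elements) of a set of points in the plane,
with the product (componentwise) order. -/
def sk (S : Set (ℝ × ℝ)) : Set (ℝ × ℝ) := {u ∈ S | ∀ v ∈ S, u ≤ v → v = u}

/-- Lexicographic order on points: compare x-coordinates first, then y-coordinates. -/
def lexXY (p q : ℝ × ℝ) : Prop := p.1 < q.1 ∨ (p.1 = q.1 ∧ p.2 ≤ q.2)

/-- Lexicographic order on points: compare y-coordinates first, then x-coordinates. -/
def lexYX (p q : ℝ × ℝ) : Prop := p.2 < q.2 ∨ (p.2 = q.2 ∧ p.1 ≤ q.1)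

section Maximal

variable {α β : Type*} [PartialOrder α]

theorem Maximal.mem_sep_forall_le_imp_eq {S K : Set α} {u : α} (hu : Maximal (· ∈ S) u)
    (hK : K ⊆ S) : u ∈ {p ∈ S | ∀ k ∈ K, p ≤ k → p = k} :=
  ⟨hu.prop, fun _ hk hle => hu.eq_of_le (hK hk) hle⟩

theorem Set.Finite.maximal_mem_iff_of_subset {S R : Set α} (hS : S.Finite) (hRS : R ⊆ S)
    (hSR : ∀ u, Maximal (· ∈ S) u → u ∈ R) {u : α} :
    Maximal (· ∈ S) u ↔ Maximal (· ∈ R) u := by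
  refine ⟨fun hu => hu.mono hRS (hSR u hu), fun hu => ⟨hRS hu.prop, fun v hv huv => ?_⟩⟩
  obtain ⟨w, hvw, hw⟩ := hS.exists_le_maximal hv
  exact hvw.trans (hu.eq_of_ge (hSR w hw) (huv.trans hvw)).le

theorem maximal_mem_of_forall_map_le [PartialOrder β] {f : α → β} (hf : Monotone f)
    (hinj : Function.Injective f) {s : Set α} {u : α} (hu : u ∈ s)
    (hmax : ∀ p ∈ s, f p ≤ f u) : Maximal (· ∈ s) u :=
  ⟨hu, fun _ hv huv => (hinj ((hmax _ hv).antisymm (hf huv))).le⟩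

end Maximal

theorem sk_eq_setOf_maximal (S : Set (ℝ × ℝ)) : sk S = {u | Maximal (· ∈ S) u} :=
  Set.ext fun _ => ⟨fun h => ⟨h.1, fun v hv huv => (h.2 v hv huv).le⟩,
    fun h => ⟨h.1, fun _ hv huv => h.eq_of_ge hv huv⟩⟩

theorem lexXY_iff_toLex_le {p q : ℝ × ℝ} : lexXY p q ↔ toLex p ≤ toLex q :=
  Prod.Lex.le_iff.symm

theorem lexYX_iff_toLex_swap_le {p q : ℝ × ℝ} : lexYX p q ↔ toLex p.swap ≤ toLex q.swap :=
  (Prod.Lex.le_iff (x := toLex p.swap) (y := toLex q.swap)).symm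

theorem stmt_3 (S K : Set (ℝ × ℝ)) (hS : S.Finite) (hK : K ⊆ sk S)
    (R : Set (ℝ × ℝ)) (hR : R = {p ∈ S | ∀ k ∈ K, p ≤ k → p = k}) :
    sk S = sk R ∧
    (R.Nonempty → ∃ u ∈ R, (∀ p ∈ R, lexXY p u) ∧ u ∈ sk S) ∧
    (R.Nonempty → ∃ v ∈ R, (∀ p ∈ R, lexYX p v) ∧ v ∈ sk S) := by
  have hRS : R ⊆ S := hR ▸ fun _ hp => hp.1
  have hKS : K ⊆ S := hK.trans fun _ hu => hu.1
  have hsk : sk S = sk R := by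
    simp only [sk_eq_setOf_maximal]
    ext u
    exact hS.maximal_mem_iff_of_subset hRS fun _ hw => hR ▸ hw.mem_sep_forall_le_imp_eq hKS
  have hRfin : R.Finite := hS.subset hRS
  refine ⟨hsk, fun hne => ?_, fun hne => ?_⟩
  · obtain ⟨u, hu, hmax⟩ := R.exists_max_image toLex hRfin hne
    refine ⟨u, hu, fun p hp => lexXY_iff_toLex_le.2 (hmax p hp), ?_⟩
    rw [hsk, sk_eq_setOf_maximal]
    exact maximal_mem_of_forall_map_le Prod.Lex.toLex_mono toLex.injective hu hmax
  · obtain ⟨v, hv, hmax⟩ := R.exists_max_image (toLex ∘ Prod.swap) hRfin hne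
    refine ⟨v, hv, fun p hp => lexYX_iff_toLex_swap_le.2 (hmax p hp), ?_⟩
    rw [hsk, sk_eq_setOf_maximal]
    exact maximal_mem_of_forall_map_le (fun _ _ h => Prod.Lex.toLex_mono (Prod.swap_le_swap.2 h))
      (toLex.injective.comp Prod.swap_injective) hv hmax
end

section
/- Let S be a finite set of points in ℝ², let a < b be reals, and let T = {p ∈ S : a < p.1 ≤ b} be the points of S in the vertical strip (a, b]. Suppose T is nonempty and let u be the maximum of T in the lexicographic order comparing first y-coordinates then x-coordinates. If u ∉ sk(S), then no point of T belongs to sk(S); in fact there exists v ∈ S with v.1 > b that dominates every point of T. -/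
theorem stmt_4 (S : Set (ℝ × ℝ)) (hS : S.Finite) (a b : ℝ) (hab : a < b)
    (T : Set (ℝ × ℝ)) (hT : T = {p ∈ S | a < p.1 ∧ p.1 ≤ b}) (hTne : T.Nonempty)
    (u : ℝ × ℝ) (huT : u ∈ T) (hu : ∀ p ∈ T, lexYX p u) (husk : u ∉ sk S) :
    (∀ p ∈ T, p ∉ sk S) ∧ ∃ v ∈ S, b < v.1 ∧ ∀ p ∈ T, p ≤ v := by
  subst hT
  obtain ⟨huS, hua, hub⟩ := huT
  -- get a strict dominator w of u
  have : ∃ w ∈ S, u ≤ w ∧ w ≠ u := by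
    by_contra h
    push_neg at h
    exact husk ⟨huS, h⟩
  obtain ⟨w, hwS, hle, hne⟩ := this
  have hle1 : u.1 ≤ w.1 := hle.1
  have hle2 : u.2 ≤ w.2 := hle.2
  have hwb : b < w.1 := by
    by_contra hwb
    push_neg at hwb
    have hwT : w ∈ {p ∈ S | a < p.1 ∧ p.1 ≤ b} := ⟨hwS, lt_of_lt_of_le hua hle1, hwb⟩
    rcases hu w hwT with h | ⟨h2, h1⟩
    · exact absurd hle2 (not_le.mpr h)
    · exact hne (Prod.ext (le_antisymm h1 hle1) h2)
  have hdom : ∀ p ∈ {p ∈ S | a < p.1 ∧ p.1 ≤ b}, p ≤ w := by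
    intro p hp
    have hpy : p.2 ≤ u.2 := by
      rcases hu p hp with h | ⟨h2, _⟩
      · exact h.le
      · exact h2.le
    exact ⟨le_trans hp.2.2 hwb.le, le_trans hpy hle2⟩
  refine ⟨fun p hp hpsk => ?_, w, hwS, hwb, hdom⟩
  have := hpsk.2 w hwS (hdom p hp)
  subst this
  exact absurd hp.2.2 (not_le.mpr hwb)
end

section
/- Let T be a finite set of n distinct real numbers, let ε ∈ (0, 1], let J be a positive integer with J·ε ≤ 1, and let q₁ ≤ q₂ ≤ … ≤ q_J be real numbers such that for each j ∈ {1, …, J}, |{y ∈ T : y < q_j}| ≤ j·ε·n and |{y ∈ T : y > q_j}| ≤ (1 − j·ε)·n. For any real v, let m = |{j ∈ {1, …, J} : q_j < v}|. Then m·ε·n ≤ |{y ∈ T : y < v}|, and if m < J then |{y ∈ T : y < v}| ≤ (m+1)·ε·n. -/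
theorem stmt_6 (T : Finset ℝ) (n : ℕ) (hn : T.card = n)
    (ε : ℝ) (hε : 0 < ε) (hε1 : ε ≤ 1)
    (J : ℕ) (hJ : 1 ≤ J) (hJε : (J : ℝ) * ε ≤ 1)
    (q : Fin J → ℝ) (hmono : Monotone q)
    (hq : ∀ j : Fin J,
      ((T.filter (fun y => y < q j)).card : ℝ) ≤ ((j : ℕ) + 1) * ε * n ∧
      ((T.filter (fun y => q j < y)).card : ℝ) ≤ (1 - ((j : ℕ) + 1) * ε) * n)
    (v : ℝ) (m : ℕ)
    (hm : m = (Finset.univ.filter (fun j : Fin J => q j < v)).card) :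
    (m : ℝ) * ε * n ≤ ((T.filter (fun y => y < v)).card : ℝ) ∧
    (m < J → ((T.filter (fun y => y < v)).card : ℝ) ≤ ((m : ℝ) + 1) * ε * n) := by
  have hmJ : m ≤ J := by
    rw [hm]
    calc (Finset.univ.filter (fun j : Fin J => q j < v)).card
        ≤ (Finset.univ : Finset (Fin J)).card := Finset.card_le_card (Finset.filter_subset _ _)
      _ = J := by simp
  constructor
  · rcases Nat.eq_zero_or_pos m with h0 | hpos
    · rw [h0]; simp
    · set k : Fin J := ⟨m - 1, by omega⟩ with hk
      have hkv : q k < v := by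
        by_contra hnot
        push_neg at hnot
        have hsub : (Finset.univ.filter (fun j : Fin J => q j < v)) ⊆ Finset.Iio k := by
          intro j hj
          simp only [Finset.mem_filter, Finset.mem_univ, true_and] at hj
          simp only [Finset.mem_Iio]
          by_contra hle
          push_neg at hle
          exact absurd (le_trans hnot (hmono hle)) (not_le.mpr hj)
        have hcard := Finset.card_le_card hsub
        rw [← hm, Fin.card_Iio] at hcard
        simp only [hk] at hcard
        omega
      have h2 := (hq k).2
      have hkval : ((k : ℕ) : ℝ) + 1 = (m : ℝ) := by
        have : (k : ℕ) = m - 1 := rfl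
        rw [this]
        push_cast [Nat.cast_sub hpos]
        ring
      rw [hkval] at h2
      have hsub : T.filter (fun y => ¬ (q k < y)) ⊆ T.filter (fun y => y < v) := by
        intro x hx
        simp only [Finset.mem_filter, not_lt] at hx ⊢
        exact ⟨hx.1, lt_of_le_of_lt hx.2 hkv⟩
      have hcard := Finset.card_le_card hsub
      have hsplit : (T.filter (fun y => q k < y)).card
          + (T.filter (fun y => ¬ (q k < y))).card = T.card :=
        Finset.card_filter_add_card_filter_not _
      have hcast : ((T.filter (fun y => ¬ (q k < y))).card : ℝ)
          = (n : ℝ) - ((T.filter (fun y => q k < y)).card : ℝ) := by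
        rw [← hn]
        have := hsplit
        push_cast [← this]
        ring
      have hle : ((T.filter (fun y => ¬ (q k < y))).card : ℝ)
          ≤ ((T.filter (fun y => y < v)).card : ℝ) := by exact_mod_cast hcard
      nlinarith [hle, hcast, h2]
  · intro hmlt
    set k : Fin J := ⟨m, hmlt⟩ with hk
    have hvk : v ≤ q k := by
      by_contra hnot
      push_neg at hnot
      have hsub : Finset.Iic k ⊆ (Finset.univ.filter (fun j : Fin J => q j < v)) := by
        intro j hj
        simp only [Finset.mem_Iic] at hj
        simp only [Finset.mem_filter, Finset.mem_univ, true_and]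
        exact lt_of_le_of_lt (hmono hj) hnot
      have hcard := Finset.card_le_card hsub
      rw [← hm, Fin.card_Iic] at hcard
      simp only [hk] at hcard
      omega
    have h1 := (hq k).1
    have hkval : ((k : ℕ) : ℝ) = (m : ℝ) := rfl
    rw [hkval] at h1
    have hsub : T.filter (fun y => y < v) ⊆ T.filter (fun y => y < q k) := by
      intro x hx
      simp only [Finset.mem_filter] at hx ⊢
      exact ⟨hx.1, lt_of_lt_of_le hx.2 hvk⟩
    have hcard : ((T.filter (fun y => y < v)).card : ℝ)
        ≤ ((T.filter (fun y => y < q k)).card : ℝ) := by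
      exact_mod_cast Finset.card_le_card hsub
    linarith
end

section
/- Let t ≥ 2 be an integer, let n, s, k be positive reals, and let Y₁, …, Y_{t−1} be reals with Y_ℓ ≥ 1 for all ℓ and ∑_{ℓ=1}^{t−1} Y_ℓ ≤ k. Define k₁ = t−1, k_ℓ = Y_{ℓ−1}·(t−1) for 2 ≤ ℓ ≤ t−1, and d_ℓ = (2·k_ℓ/(t−1)) · (n(t−1)/(2s))^{1/t} for 1 ≤ ℓ ≤ t−1. Then s·∑_{ℓ=1}^{t−1} d_ℓ ≤ 2sk·(n(t−1)/(2s))^{1/t} and 2^{t−1}·n·∏_{ℓ=1}^{t−1} (Y_ℓ/d_ℓ) ≤ (2sk/(t−1))·(n(t−1)/(2s))^{1/t}. -/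
theorem stmt_9 (t : ℕ) (ht : 2 ≤ t) (n s k : ℝ) (hn : 0 < n) (hs : 0 < s) (hk : 0 < k)
    (Y kk d : ℕ → ℝ)
    (hY : ∀ ℓ ∈ Finset.Icc 1 (t - 1), 1 ≤ Y ℓ)
    (hsum : ∑ ℓ ∈ Finset.Icc 1 (t - 1), Y ℓ ≤ k)
    (hk1 : kk 1 = (t : ℝ) - 1)
    (hkk : ∀ ℓ ∈ Finset.Icc 2 (t - 1), kk ℓ = Y (ℓ - 1) * ((t : ℝ) - 1))
    (hd : ∀ ℓ ∈ Finset.Icc 1 (t - 1),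
      d ℓ = (2 * kk ℓ / ((t : ℝ) - 1)) * (n * ((t : ℝ) - 1) / (2 * s)) ^ ((1 : ℝ) / t)) :
    s * ∑ ℓ ∈ Finset.Icc 1 (t - 1), d ℓ ≤
      2 * s * k * (n * ((t : ℝ) - 1) / (2 * s)) ^ ((1 : ℝ) / t) ∧
    (2 : ℝ) ^ (t - 1) * n * ∏ ℓ ∈ Finset.Icc 1 (t - 1), (Y ℓ / d ℓ) ≤
      (2 * s * k / ((t : ℝ) - 1)) * (n * ((t : ℝ) - 1) / (2 * s)) ^ ((1 : ℝ) / t) := by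
  set m := t - 1 with hmdef
  have hm1 : 1 ≤ m := by omega
  have htm : (t : ℝ) - 1 = (m : ℝ) := by
    have h : t = m + 1 := by omega
    rw [h]; push_cast; ring
  have hmpos : (0 : ℝ) < m := by exact_mod_cast hm1
  set A : ℝ := (n * ((t : ℝ) - 1) / (2 * s)) ^ ((1 : ℝ) / t) with hAdef
  have hbase : 0 < n * ((t : ℝ) - 1) / (2 * s) := by rw [htm]; positivity
  have hApos : 0 < A := Real.rpow_pos_of_pos hbase _
  have hAt : A ^ t = n * ((t : ℝ) - 1) / (2 * s) := by
    rw [hAdef, ← Real.rpow_natCast (_ ^ _) t, ← Real.rpow_mul hbase.le]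
    rw [one_div, inv_mul_cancel₀ (by exact_mod_cast (by omega : t ≠ 0)), Real.rpow_one]
  have hYpos : ∀ ℓ ∈ Finset.Icc 1 m, 0 < Y ℓ := fun ℓ hℓ => lt_of_lt_of_le one_pos (hY ℓ hℓ)
  -- sum of Y over Icc 1 (m-1)
  have hins : Finset.Icc 1 m = insert m (Finset.Icc 1 (m - 1)) := by
    ext x; simp [Finset.mem_Icc]; omega
  have hnotmem : m ∉ Finset.Icc 1 (m - 1) := by simp [Finset.mem_Icc]; omega
  have hsplit : ∑ ℓ ∈ Finset.Icc 1 m, Y ℓ = Y m + ∑ ℓ ∈ Finset.Icc 1 (m - 1), Y ℓ := by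
    rw [hins, Finset.sum_insert hnotmem]
  have hYm1 : 1 ≤ Y m := hY m (by simp [Finset.mem_Icc]; omega)
  have hS' : 1 + ∑ ℓ ∈ Finset.Icc 1 (m - 1), Y ℓ ≤ k := by
    have := hsum; rw [hsplit] at this; linarith
  have hYmk : Y m ≤ k := by
    have hnn : ∀ ℓ ∈ Finset.Icc 1 (m - 1), 0 ≤ Y ℓ := fun ℓ hℓ => le_of_lt (hYpos ℓ (by
      simp [Finset.mem_Icc] at hℓ ⊢; omega))
    have := Finset.sum_nonneg hnn
    rw [hsplit] at hsum; linarith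
  constructor
  · -- part 1
    have hsum2 : ∑ ℓ ∈ Finset.Icc 1 m, d ℓ = (2 * A / (m : ℝ)) * ∑ ℓ ∈ Finset.Icc 1 m, kk ℓ := by
      rw [Finset.mul_sum]
      refine Finset.sum_congr rfl fun ℓ hℓ => ?_
      rw [hd ℓ hℓ, htm]; ring
    have hins1 : Finset.Icc 1 m = insert 1 (Finset.Icc 2 m) := by
      ext x; simp [Finset.mem_Icc]; omega
    have hre : ∑ ℓ ∈ Finset.Icc 2 m, Y (ℓ - 1) = ∑ j ∈ Finset.Icc 1 (m - 1), Y j := by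
      apply Finset.sum_nbij' (fun ℓ => ℓ - 1) (fun j => j + 1) <;>
        simp only [Finset.mem_Icc] <;> intros <;> first | rfl | trivial | omega
    have hkksum : ∑ ℓ ∈ Finset.Icc 1 m, kk ℓ
        = (m : ℝ) * (1 + ∑ j ∈ Finset.Icc 1 (m - 1), Y j) := by
      rw [hins1, Finset.sum_insert (by simp), hk1, htm]
      have : ∑ ℓ ∈ Finset.Icc 2 m, kk ℓ = ∑ ℓ ∈ Finset.Icc 2 m, Y (ℓ - 1) * (m : ℝ) := by
        refine Finset.sum_congr rfl fun ℓ hℓ => ?_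
        rw [hkk ℓ hℓ, htm]
      rw [this, ← Finset.sum_mul, hre]; ring
    rw [hsum2, hkksum]
    have : s * (2 * A / (m : ℝ) * ((m : ℝ) * (1 + ∑ j ∈ Finset.Icc 1 (m - 1), Y j)))
        = 2 * s * A * (1 + ∑ j ∈ Finset.Icc 1 (m - 1), Y j) := by
      field_simp
    rw [this]
    calc 2 * s * A * (1 + ∑ j ∈ Finset.Icc 1 (m - 1), Y j) ≤ 2 * s * A * k := by
          have : 0 < 2 * s * A := by positivity
          exact mul_le_mul_of_nonneg_left hS' this.le
      _ = 2 * s * k * A := by ring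
  · -- part 2
    have claim : ∀ j, 1 ≤ j → j ≤ m →
        ∏ ℓ ∈ Finset.Icc 1 j, (Y ℓ / d ℓ) = Y j / (2 * A) ^ j := by
      intro j hj1 hjm
      induction j with
      | zero => omega
      | succ p ih =>
        rcases Nat.eq_or_lt_of_le hj1 with h1 | h1
        · -- p + 1 = 1
          have hp : p = 0 := by omega
          subst hp
          simp only [Finset.Icc_self, Finset.prod_singleton]
          rw [hd 1 (by simp [Finset.mem_Icc]; omega), hk1, htm, pow_one]
          field_simp
        · have hp1 : 1 ≤ p := by omega
          have hpm : p ≤ m := by omega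
          have hstep : Finset.Icc 1 (p + 1) = insert (p + 1) (Finset.Icc 1 p) := by
            ext x; simp [Finset.mem_Icc]; omega
          rw [hstep, Finset.prod_insert (by simp [Finset.mem_Icc]), ih hp1 hpm]
          have hdp : d (p + 1) = 2 * Y p * A := by
            rw [hd (p + 1) (by simp [Finset.mem_Icc]; omega),
              hkk (p + 1) (by simp [Finset.mem_Icc]; omega), htm]
            have hmne : (m : ℝ) ≠ 0 := ne_of_gt hmpos
            simp only [Nat.add_sub_cancel]
            field_simp
          rw [hdp]
          have hYp : Y p ≠ 0 := ne_of_gt (hYpos p (by simp [Finset.mem_Icc]; omega))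
          have hAne : A ≠ 0 := ne_of_gt hApos
          have h2A : ((2 : ℝ) * A) ^ p ≠ 0 := by positivity
          field_simp
          ring
    rw [claim m hm1 le_rfl]
    have hexp : (2 * A) ^ m = 2 ^ m * A ^ m := mul_pow 2 A m
    have hAm : 0 < A ^ m := pow_pos hApos m
    rw [htm]
    have hLHS : (2:ℝ)^m * n * (Y m / (2*A)^m) = n * Y m / A ^ m := by
      rw [hexp]
      have h2m : ((2:ℝ))^m ≠ 0 := by positivity
      field_simp
    rw [hLHS, div_le_iff₀ hAm]
    have hAt1 : A * A ^ m = n * (m:ℝ) / (2*s) := by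
      have h1 : A * A ^ m = A ^ t := by
        rw [← pow_succ']
        congr 1
        omega
      rw [h1, hAt, htm]
    have hkey : 2 * s * k / (m:ℝ) * A * A ^ m = n * k := by
      rw [mul_assoc, hAt1]
      field_simp
    calc n * Y m ≤ n * k := mul_le_mul_of_nonneg_left hYmk hn.le
      _ = 2 * s * k / (m:ℝ) * A * A ^ m := hkey.symm
end

section
/- Let S₁, …, Sₛ be finite sets of points in ℝ² such that for all i < j, every point of Sᵢ has strictly smaller x-coordinate than every point of S_j, and let S = ⋃_{i=1}^s Sᵢ. Then for every i ∈ {1, …, s} and every p ∈ Sᵢ: p ∈ sk(S) if and only if p ∈ sk(Sᵢ) and p.2 > q.2 for every q ∈ ⋃_{j > i} S_j. In particular, sk(S) ∩ Sᵢ = {p ∈ sk(Sᵢ) : p.2 > max{q.2 : q ∈ ⋃_{j>i} S_j}} (where the condition is vacuous for i = s). -/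
theorem stmt_10 (s : ℕ) (S : Fin s → Set (ℝ × ℝ)) (hfin : ∀ i, (S i).Finite)
    (hsorted : ∀ i j : Fin s, i < j → ∀ p ∈ S i, ∀ q ∈ S j, p.1 < q.1) :
    ∀ i : Fin s, ∀ p ∈ S i,
      (p ∈ sk (⋃ i, S i) ↔
        p ∈ sk (S i) ∧ ∀ j : Fin s, i < j → ∀ q ∈ S j, q.2 < p.2) := by
  intro i p hp
  constructor
  · rintro ⟨-, hmax⟩
    refine ⟨⟨hp, fun v hv hle => hmax v (Set.mem_iUnion.2 ⟨i, hv⟩) hle⟩, ?_⟩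
    intro j hij q hq
    by_contra hle
    push_neg at hle
    have hx := hsorted i j hij p hp q hq
    have : q = p := hmax q (Set.mem_iUnion.2 ⟨j, hq⟩) ⟨hx.le, hle⟩
    exact absurd (this ▸ hx) (lt_irrefl _)
  · rintro ⟨⟨-, hmax⟩, hbelow⟩
    refine ⟨Set.mem_iUnion.2 ⟨i, hp⟩, ?_⟩
    intro v hv hle
    obtain ⟨j, hvj⟩ := Set.mem_iUnion.1 hv
    rcases lt_trichotomy i j with h | h | h
    · exact absurd (hbelow j h v hvj) (not_lt.2 hle.2)
    · exact hmax v (h ▸ hvj) hle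
    · exact absurd (hsorted j i h v hvj p hp) (not_lt.2 hle.1)
end

section
/- Let m ≥ 1 and s ≥ 1 be integers and let X₁, …, Xₛ : {1,…,m} → {0,1} be bit vectors. Let b* : {1,…,m} → {0,1} be their coordinatewise AND, b*_j = min_i Xᵢ(j). Then sk(⋃_{i=1}^s stair(Xᵢ)) = sk(stair(b*)), where sk denotes the set of maximal elements under the componentwise order on ℤ². -/
/-- The skyline (set of maximal elements) of a set of lattice points,
with the product (componentwise) order on ℤ × ℤ. -/
def skZ (S : Set (ℤ × ℤ)) : Set (ℤ × ℤ) := {u ∈ S | ∀ v ∈ S, u ≤ v → v = u}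

/-- The staircase associated with a bit vector `b` on coordinates 1,…,m:
the lattice points visited by the monotone path from (0,m) to (m,0) that, for each j
from 1 to m, moves right-then-down if b j = false and down-then-right if b j = true. -/
def stair (m : ℕ) (b : ℕ → Bool) : Set (ℤ × ℤ) :=
  {p | ∃ j : ℕ, j ≤ m ∧ p = ((j : ℤ), (m : ℤ) - j)} ∪
  {p | ∃ j : ℕ, 1 ≤ j ∧ j ≤ m ∧ b j = false ∧ p = ((j : ℤ), (m : ℤ) - j + 1)} ∪
  {p | ∃ j : ℕ, 1 ≤ j ∧ j ≤ m ∧ b j = true ∧ p = ((j : ℤ) - 1, (m : ℤ) - j)}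

lemma skZ_subset_of_cofinal {S T : Set (ℤ × ℤ)}
    (hST : ∀ u ∈ S, ∃ v ∈ T, u ≤ v) (hTS : ∀ u ∈ T, ∃ v ∈ S, u ≤ v) :
    skZ S ⊆ skZ T := by
  rintro u ⟨huS, hmax⟩
  obtain ⟨t, htT, hut⟩ := hST u huS
  obtain ⟨w, hwS, htw⟩ := hTS t htT
  have hwu : w = u := hmax w hwS (hut.trans htw)
  have htu : t = u := le_antisymm (hwu ▸ htw) hut
  refine ⟨htu ▸ htT, ?_⟩
  intro v hvT huv
  obtain ⟨w', hw'S, hvw'⟩ := hTS v hvT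
  have hw'u : w' = u := hmax w' hw'S (huv.trans hvw')
  exact le_antisymm (hw'u ▸ hvw') huv

lemma skZ_eq_of_cofinal {S T : Set (ℤ × ℤ)}
    (hST : ∀ u ∈ S, ∃ v ∈ T, u ≤ v) (hTS : ∀ u ∈ T, ∃ v ∈ S, u ≤ v) :
    skZ S = skZ T :=
  le_antisymm (skZ_subset_of_cofinal hST hTS) (skZ_subset_of_cofinal hTS hST)

theorem stmt_11 (m s : ℕ) (hm : 1 ≤ m) (hs : 1 ≤ s) (X : Fin s → ℕ → Bool)
    (bstar : ℕ → Bool) (hb : ∀ j, bstar j = true ↔ ∀ i, X i j = true) :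
    skZ (⋃ i, stair m (X i)) = skZ (stair m bstar) := by
  have i0 : Fin s := ⟨0, hs⟩
  apply skZ_eq_of_cofinal
  · intro u hu
    obtain ⟨i, hi⟩ := Set.mem_iUnion.mp hu
    rcases hi with (⟨j, hj, rfl⟩ | ⟨j, hj1, hjm, hbj, rfl⟩) | ⟨j, hj1, hjm, hbj, rfl⟩
    · exact ⟨_, Or.inl (Or.inl ⟨j, hj, rfl⟩), le_refl _⟩
    · -- false-outer point of X i: bstar j must be false
      have hbsj : bstar j = false := by
        rcases Bool.eq_false_or_eq_true (bstar j) with h | h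
        · exact absurd ((hb j).mp h i) (by simp [hbj])
        · exact h
      exact ⟨_, Or.inl (Or.inr ⟨j, hj1, hjm, hbsj, rfl⟩), le_refl _⟩
    · -- true-outer point: dominated by diagonal point (j-1, m-(j-1))
      refine ⟨((j : ℤ) - 1, (m : ℤ) - (j - 1 : ℕ)), Or.inl (Or.inl ⟨j - 1, by omega, ?_⟩), ?_⟩
      · have : ((j - 1 : ℕ) : ℤ) = (j : ℤ) - 1 := by omega
        rw [this]
      · constructor
        · exact le_refl _
        · have : ((j - 1 : ℕ) : ℤ) = (j : ℤ) - 1 := by omega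
          simp only [this]
          omega
  · intro u hu
    rcases hu with (⟨j, hj, rfl⟩ | ⟨j, hj1, hjm, hbj, rfl⟩) | ⟨j, hj1, hjm, hbj, rfl⟩
    · exact ⟨_, Set.mem_iUnion.mpr ⟨i0, Or.inl (Or.inl ⟨j, hj, rfl⟩)⟩, le_refl _⟩
    · -- bstar j = false: some X i j = false
      have : ∃ i, X i j = false := by
        by_contra h
        push_neg at h
        have : bstar j = true := (hb j).mpr fun i => by simpa using h i
        simp [this] at hbj
      obtain ⟨i, hi⟩ := this
      exact ⟨_, Set.mem_iUnion.mpr ⟨i, Or.inl (Or.inr ⟨j, hj1, hjm, hi, rfl⟩)⟩, le_refl _⟩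
    · refine ⟨((j : ℤ) - 1, (m : ℤ) - (j - 1 : ℕ)),
        Set.mem_iUnion.mpr ⟨i0, Or.inl (Or.inl ⟨j - 1, by omega, ?_⟩)⟩, ?_⟩
      · have : ((j - 1 : ℕ) : ℤ) = (j : ℤ) - 1 := by omega
        rw [this]
      · constructor
        · exact le_refl _
        · have : ((j - 1 : ℕ) : ℤ) = (j : ℤ) - 1 := by omega
          simp only [this]
          omega
end

section
/- Let m ≥ 1 be an integer. The map b ↦ sk(stair(b)) from bit vectors b : {1,…,m} → {0,1} to finite subsets of ℤ² is injective: if b ≠ b' then sk(stair(b)) ≠ sk(stair(b')). (Concretely, if b_j = 0 and b'_j = 1 then the point (j, m−j+1) lies in sk(stair(b)) but not in stair(b').) -/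
lemma key_mem (m : ℕ) (b : ℕ → Bool) (j : ℕ) (h1 : 1 ≤ j) (h2 : j ≤ m)
    (hb : b j = false) : ((j : ℤ), (m : ℤ) - j + 1) ∈ skZ (stair m b) := by
  constructor
  · left; right
    exact ⟨j, h1, h2, hb, rfl⟩
  · rintro v hv ⟨hle1, hle2⟩
    rcases hv with (⟨k, hk, rfl⟩ | ⟨k, hk1, hk2, hbk, rfl⟩) | ⟨k, hk1, hk2, hbk, rfl⟩
    · simp only at hle1 hle2
      have : (k : ℤ) ≤ (j : ℤ) - 1 := by omega
      omega
    · simp only at hle1 hle2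
      have : (k : ℤ) = j := by omega
      simp [this]
    · simp only at hle1 hle2
      omega

lemma key_notmem (m : ℕ) (b' : ℕ → Bool) (j : ℕ) (h1 : 1 ≤ j)
    (hb : b' j = true) : ((j : ℤ), (m : ℤ) - j + 1) ∉ stair m b' := by
  rintro ((⟨k, hk, heq⟩ | ⟨k, hk1, hk2, hbk, heq⟩) | ⟨k, hk1, hk2, hbk, heq⟩)
  · rw [Prod.ext_iff] at heq; simp only at heq; omega
  · rw [Prod.ext_iff] at heq; simp only at heq
    have : k = j := by omega
    rw [this] at hbk
    rw [hbk] at hb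
    exact Bool.false_ne_true hb
  · rw [Prod.ext_iff] at heq; simp only at heq; omega

theorem stmt_12 (m : ℕ) (hm : 1 ≤ m) (b b' : ℕ → Bool)
    (hne : ∃ j : ℕ, 1 ≤ j ∧ j ≤ m ∧ b j ≠ b' j) :
    skZ (stair m b) ≠ skZ (stair m b') := by
  obtain ⟨j, h1, h2, hne⟩ := hne
  intro heq
  rcases Bool.eq_false_or_eq_true (b j) with hb | hb
  · have hb' : b' j = false := by
      cases hb'' : b' j
      · rfl
      · exact absurd (hb.trans hb''.symm) hne
    have h := key_mem m b' j h1 h2 hb'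
    rw [← heq] at h
    exact key_notmem m b j h1 hb h.1
  · have hb' : b' j = true := by
      cases hb'' : b' j
      · exact absurd (hb.trans hb''.symm) hne
      · rfl
    have h := key_mem m b j h1 h2 hb
    rw [heq] at h
    exact key_notmem m b' j h1 hb' h.1
end

section
/- Let m ≥ 1 and s ≥ 1 be integers and let X₁, …, Xₛ : {1,…,m} → {0,1} be bit vectors. Then sk(⋃_{i=1}^s stair(Xᵢ)) = sk(stair(0)) — where 0 denotes the all-zeros bit vector — if and only if there is no index j ∈ {1,…,m} with Xᵢ(j) = 1 for all i ∈ {1,…,s}. In other words, the skyline of the union of the s staircases equals the skyline of the all-zeros staircase exactly when s-DISJ(X₁,…,Xₛ) = 0. -/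
lemma mem_false_pt (m j : ℕ) (b : ℕ → Bool) (h1 : 1 ≤ j) (hm : j ≤ m)
    (hb : b j = false) : ((j : ℤ), (m : ℤ) - j + 1) ∈ stair m b :=
  Or.inl (Or.inr ⟨j, h1, hm, hb, rfl⟩)

lemma not_mem_true_pt (m j : ℕ) (b : ℕ → Bool) (h1 : 1 ≤ j) (hm : j ≤ m)
    (hb : b j = true) : ((j : ℤ), (m : ℤ) - j + 1) ∉ stair m b := by
  intro hp
  simp only [stair, Set.mem_union, Set.mem_setOf_eq] at hp
  rcases hp with (⟨j', hjm, he⟩ | ⟨j', h1', hm', hb', he⟩) | ⟨j', h1', hm', hb', he⟩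
  · rw [Prod.mk.injEq] at he; omega
  · rw [Prod.mk.injEq] at he
    have : j = j' := by omega
    subst this; rw [hb] at hb'; exact Bool.noConfusion hb'
  · rw [Prod.mk.injEq] at he; omega

lemma stair_cover (m : ℕ) (hm : 1 ≤ m) (b : ℕ → Bool) (p : ℤ × ℤ)
    (hp : p ∈ stair m b) :
    ∃ j : ℕ, 1 ≤ j ∧ j ≤ m ∧ p ≤ ((j : ℤ), (m : ℤ) - j + 1) := by
  simp only [stair, Set.mem_union, Set.mem_setOf_eq] at hp
  rcases hp with (⟨j, hjm, rfl⟩ | ⟨j, h1, hjm, _, rfl⟩) | ⟨j, h1, hjm, _, rfl⟩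
  · rcases Nat.eq_zero_or_pos j with hj0 | hj0
    · subst hj0
      exact ⟨1, le_refl _, hm, by simp [Prod.mk_le_mk]⟩
    · exact ⟨j, hj0, hjm, by simp [Prod.mk_le_mk]⟩
  · exact ⟨j, h1, hjm, le_refl _⟩
  · exact ⟨j, h1, hjm, by simp [Prod.mk_le_mk]⟩

lemma sk_eq_T (m : ℕ) (S : Set (ℤ × ℤ))
    (hT : ∀ j : ℕ, 1 ≤ j → j ≤ m → ((j : ℤ), (m : ℤ) - j + 1) ∈ S)
    (hC : ∀ p ∈ S, ∃ j : ℕ, 1 ≤ j ∧ j ≤ m ∧ p ≤ ((j : ℤ), (m : ℤ) - j + 1)) :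
    skZ S = {p | ∃ j : ℕ, 1 ≤ j ∧ j ≤ m ∧ p = ((j : ℤ), (m : ℤ) - j + 1)} := by
  ext p
  constructor
  · rintro ⟨hpS, hmax⟩
    obtain ⟨j, hj1, hjm, hle⟩ := hC p hpS
    exact ⟨j, hj1, hjm, (hmax _ (hT j hj1 hjm) hle).symm⟩
  · rintro ⟨j, hj1, hjm, rfl⟩
    refine ⟨hT j hj1 hjm, ?_⟩
    intro v hv hle
    obtain ⟨j', h1', hm', hle'⟩ := hC v hv
    have hjj : j = j' := by
      have h := le_trans hle hle'
      simp only [Prod.mk_le_mk] at h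
      omega
    subst hjj
    exact le_antisymm hle' hle

theorem stmt_13 (m s : ℕ) (hm : 1 ≤ m) (hs : 1 ≤ s) (X : Fin s → ℕ → Bool) :
    skZ (⋃ i, stair m (X i)) = skZ (stair m (fun _ => false)) ↔
      ¬ ∃ j : ℕ, 1 ≤ j ∧ j ≤ m ∧ ∀ i, X i j = true := by
  have hskF : skZ (stair m (fun _ => false)) =
      {p | ∃ j : ℕ, 1 ≤ j ∧ j ≤ m ∧ p = ((j : ℤ), (m : ℤ) - j + 1)} :=
    sk_eq_T m _ (fun j h1 h2 => mem_false_pt m j _ h1 h2 rfl) (stair_cover m hm _)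
  constructor
  · intro heq
    rintro ⟨j, hj1, hjm, hall⟩
    have hmemF : ((j : ℤ), (m : ℤ) - j + 1) ∈ skZ (stair m (fun _ => false)) := by
      rw [hskF]; exact ⟨j, hj1, hjm, rfl⟩
    rw [← heq] at hmemF
    have hU : ((j : ℤ), (m : ℤ) - j + 1) ∈ ⋃ i, stair m (X i) := hmemF.1
    simp only [Set.mem_iUnion] at hU
    obtain ⟨i, hi⟩ := hU
    exact not_mem_true_pt m j (X i) hj1 hjm (hall i) hi
  · intro hdisj
    push_neg at hdisj
    have hex : ∀ j : ℕ, 1 ≤ j → j ≤ m → ∃ i, X i j = false := by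
      intro j h1 h2
      obtain ⟨i, hi⟩ := hdisj j h1 h2
      exact ⟨i, by simpa using hi⟩
    rw [hskF, sk_eq_T m _ ?_ ?_]
    · intro j h1 h2
      obtain ⟨i, hi⟩ := hex j h1 h2
      exact Set.mem_iUnion.2 ⟨i, mem_false_pt m j _ h1 h2 hi⟩
    · intro p hp
      obtain ⟨i, hi⟩ := Set.mem_iUnion.1 hp
      exact stair_cover m hm _ p hi
end

section
/- Let n ≥ 1 and let A, B ⊆ {1, …, n} be nonempty sets with A ∩ B = ∅. Define S = {(f(a), g(a)) : a ∈ {1,…,n}} ⊆ ℝ², where f(a) = 2 if a ∈ A and f(a) = 1 otherwise, and g(a) = 2 if a ∈ B and g(a) = 1 otherwise. Then sk(S) = {(2, 1), (1, 2)}. -/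
open scoped Classical

theorem stmt_15 (n : ℕ) (hn : 1 ≤ n) (A B : Set ℕ)
    (hA : A ⊆ Set.Icc 1 n) (hB : B ⊆ Set.Icc 1 n)
    (hAne : A.Nonempty) (hBne : B.Nonempty) (hAB : A ∩ B = ∅)
    (S : Set (ℝ × ℝ))
    (hS : S = (fun a => ((if a ∈ A then (2 : ℝ) else 1), (if a ∈ B then (2 : ℝ) else 1))) ''
      Set.Icc 1 n) :
    sk S = {((2 : ℝ), (1 : ℝ)), ((1 : ℝ), (2 : ℝ))} := by
  obtain ⟨a0, ha0⟩ := hAne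
  obtain ⟨b0, hb0⟩ := hBne
  have ha0B : a0 ∉ B := fun h => Set.eq_empty_iff_forall_notMem.mp hAB a0 ⟨ha0, h⟩
  have hb0A : b0 ∉ A := fun h => Set.eq_empty_iff_forall_notMem.mp hAB b0 ⟨h, hb0⟩
  have h21 : ((2:ℝ),(1:ℝ)) ∈ S := by
    rw [hS]; exact ⟨a0, hA ha0, by simp [ha0, ha0B]⟩
  have h12 : ((1:ℝ),(2:ℝ)) ∈ S := by
    rw [hS]; exact ⟨b0, hB hb0, by simp [hb0, hb0A]⟩
  have hsub : ∀ p ∈ S, p = ((2:ℝ),(1:ℝ)) ∨ p = ((1:ℝ),(2:ℝ)) ∨ p = ((1:ℝ),(1:ℝ)) := by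
    rintro p hp
    rw [hS] at hp
    obtain ⟨a, -, rfl⟩ := hp
    by_cases hA' : a ∈ A <;> by_cases hB' : a ∈ B
    · exact absurd (Set.eq_empty_iff_forall_notMem.mp hAB a) (by simp [hA', hB'])
    · left; simp [hA', hB']
    · right; left; simp [hA', hB']
    · right; right; simp [hA', hB']
  ext p
  constructor
  · rintro ⟨hpS, hmax⟩
    rcases hsub p hpS with h | h | h
    · simp [h]
    · simp [h]
    · exfalso
      have := hmax (2,1) h21 (by rw [h]; constructor <;> norm_num)
      rw [h] at this
      have := congrArg Prod.fst this
      norm_num at this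
  · intro hp
    rcases hp with h | h
    · subst h
      refine ⟨h21, ?_⟩
      intro v hv hle
      rcases hsub v hv with h | h | h <;> subst h
      · rfl
      · exact absurd hle.1 (by norm_num)
      · exact absurd hle.1 (by norm_num)
    · simp only [Set.mem_singleton_iff] at h
      subst h
      refine ⟨h12, ?_⟩
      intro v hv hle
      rcases hsub v hv with h | h | h <;> subst h
      · exact absurd hle.2 (by norm_num)
      · rfl
      · exact absurd hle.2 (by norm_num)
end
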